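/- Let n ≥ 1 and let A_n be the Baskakov operator, A_n f(x) := ∑_{k=0}^∞ f(k/n)·C(n+k−1,k)·x^k/(1+x)^{n+k} for x ≥ 0, and set ϑ_n(x) := (1+x)^{−2n} ∑_{k=0}^∞ C(n+k−1,k)²·(x/(1+x))^{2k}. Then for all bounded continuous f, g : [0,∞) → ℝ and all x ≥ 0, |A_n(f·g)(x) − A_n f(x)·A_n g(x)| ≤ (1/2)·(1 − ϑ_n(x))·osc_{A_n}(f)·osc_{A_n}(g), where osc_{A_n}(f) := sup{|f(k/n) − f(l/n)| : 0 ≤ k < l < ∞} and similarly for g. -/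

import Mathlib

/-- The classical `n`-th Baskakov operator
`A_n f(x) = ∑_{k=0}^∞ f(k/n) C(n+k-1,k) x^k / (1+x)^(n+k)`. -/
noncomputable def baskakovOp (n : ℕ) (f : ℝ → ℝ) (x : ℝ) : ℝ :=
  ∑' k : ℕ, f (k / n) * ((n + k - 1).choose k : ℝ) * x ^ k / (1 + x) ^ (n + k)

/-- `ϑ_n(x) = (1+x)^(-2n) ∑_{k=0}^∞ C(n+k-1,k)² (x/(1+x))^(2k)`, the sum of squares of the
fundamental functions of the Baskakov operator. -/
noncomputable def baskakovTheta (n : ℕ) (x : ℝ) : ℝ :=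
  (1 / (1 + x) ^ (2 * n)) * ∑' k : ℕ, ((n + k - 1).choose k : ℝ) ^ 2 * (x / (1 + x)) ^ (2 * k)

/-!
For fixed `x`, the fundamental functions `a_k = a_{n,k}(x)` form a probability distribution on `ℕ`
(a negative binomial one), and `A_n f(x) = ∑ f(k/n) a_k`. Korkine's identity writes the
covariance as a double sum,
`2 (∑ F G a - (∑ F a)(∑ G a)) = ∑_{k,l} a_k a_l (F_k - F_l)(G_k - G_l)`,
in which the diagonal terms vanish; every off-diagonal term is at most
`a_k a_l osc(f) osc(g)`, and the off-diagonal weights sum to `1 - ∑ a_k² = 1 - ϑ_n(x)`.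
-/

section ChebyshevGruss

variable {ι : Type*} {a F G : ι → ℝ} {θ Cf Cg Sf Sg : ℝ}

lemma summable_norm_mul_of_abs_le (ha : Summable a) (ha0 : ∀ i, 0 ≤ a i) {C : ℝ}
    (hF : ∀ i, |F i| ≤ C) : Summable fun i => ‖F i * a i‖ :=
  (ha.mul_left C).of_nonneg_of_le (fun _ => norm_nonneg _) fun i => by
    rw [Real.norm_eq_abs, abs_mul, abs_of_nonneg (ha0 i)]
    exact mul_le_mul_of_nonneg_right (hF i) (ha0 i)

lemma hasSum_mul_prod_of_summable_norm {κ : Type*} {u : ι → ℝ} {v : κ → ℝ}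
    (hu : Summable fun i => ‖u i‖) (hv : Summable fun j => ‖v j‖) :
    HasSum (fun p : ι × κ => u p.1 * v p.2) ((∑' i, u i) * ∑' j, v j) :=
  hu.of_norm.hasSum.mul hv.of_norm.hasSum (summable_mul_of_summable_norm hu hv)

lemma hasSum_korkine (ha : HasSum a 1) (ha0 : ∀ i, 0 ≤ a i)
    (hF : ∀ i, |F i| ≤ Cf) (hG : ∀ i, |G i| ≤ Cg) :
    HasSum (fun p : ι × ι => a p.1 * a p.2 * (F p.1 - F p.2) * (G p.1 - G p.2))
      (2 * (∑' i, F i * G i * a i - (∑' i, F i * a i) * ∑' i, G i * a i)) := by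
  have hFG : ∀ i, |F i * G i| ≤ Cf * Cg := fun i => by
    rw [abs_mul]
    exact mul_le_mul (hF i) (hG i) (abs_nonneg _) ((abs_nonneg _).trans (hF i))
  have hA : Summable fun i => ‖a i‖ := ha.summable.congr fun i => (Real.norm_of_nonneg (ha0 i)).symm
  have hU := summable_norm_mul_of_abs_le ha.summable ha0 hF
  have hV := summable_norm_mul_of_abs_le ha.summable ha0 hG
  have hW := summable_norm_mul_of_abs_le ha.summable ha0 hFG
  have h := (((hasSum_mul_prod_of_summable_norm hW hA).sub
    (hasSum_mul_prod_of_summable_norm hU hV)).sub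
    (hasSum_mul_prod_of_summable_norm hV hU)).add
    (hasSum_mul_prod_of_summable_norm hA hW)
  rw [ha.tsum_eq] at h
  set W := ∑' i, F i * G i * a i
  set U := ∑' i, F i * a i
  set V := ∑' i, G i * a i
  rw [show 2 * (W - U * V) = W * 1 - U * V - V * U + 1 * W by ring]
  exact h.congr_fun fun p => by ring

lemma hasSum_indicator_offDiag (ha : HasSum a 1) (ha0 : ∀ i, 0 ≤ a i)
    (hθ : HasSum (fun i => a i ^ 2) θ) :
    HasSum ((Set.diagonal ι)ᶜ.indicator fun p => a p.1 * a p.2) (1 - θ) := by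
  have hall : HasSum (fun p : ι × ι => a p.1 * a p.2) 1 := by
    simpa using ha.mul ha (ha.summable.mul_of_nonneg ha.summable ha0 ha0)
  have hdiag : HasSum ((Set.diagonal ι).indicator fun p => a p.1 * a p.2) θ := by
    rw [← Function.diag_injective.hasSum_iff]
    · convert hθ using 1
      ext i
      simp [sq, Function.diag]
    · intro p hp
      rw [Set.range_diag] at hp
      exact Set.indicator_of_notMem hp _
  rw [Set.indicator_compl]
  exact hall.sub hdiag

theorem abs_tsum_mul_sub_tsum_mul_tsum_le (ha : HasSum a 1) (ha0 : ∀ i, 0 ≤ a i)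
    (hθ : HasSum (fun i => a i ^ 2) θ) (hF : ∀ i, |F i| ≤ Cf) (hG : ∀ i, |G i| ≤ Cg)
    (hSf : ∀ i j, i ≠ j → |F i - F j| ≤ Sf) (hSg : ∀ i j, i ≠ j → |G i - G j| ≤ Sg) :
    |∑' i, F i * G i * a i - (∑' i, F i * a i) * ∑' i, G i * a i| ≤
      1 / 2 * (1 - θ) * Sf * Sg := by
  have hterm : ∀ p : ι × ι, ‖a p.1 * a p.2 * (F p.1 - F p.2) * (G p.1 - G p.2)‖ ≤
      Sf * Sg * (Set.diagonal ι)ᶜ.indicator (fun p => a p.1 * a p.2) p := by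
    rintro ⟨i, j⟩
    by_cases hij : i = j
    · simp [hij]
    have haa : 0 ≤ a i * a j := mul_nonneg (ha0 i) (ha0 j)
    rw [Set.indicator_of_mem (show (i, j) ∈ (Set.diagonal ι)ᶜ from hij), Real.norm_eq_abs,
      abs_mul, abs_mul, abs_of_nonneg haa]
    have hSf0 : 0 ≤ Sf := (abs_nonneg _).trans (hSf i j hij)
    calc a i * a j * |F i - F j| * |G i - G j| ≤ a i * a j * Sf * Sg :=
          mul_le_mul (mul_le_mul_of_nonneg_left (hSf i j hij) haa) (hSg i j hij) (abs_nonneg _)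
            (mul_nonneg haa hSf0)
      _ = Sf * Sg * (a i * a j) := by ring
  have h := (hasSum_korkine ha ha0 hF hG).norm_le_of_bounded
    ((hasSum_indicator_offDiag ha ha0 hθ).mul_left (Sf * Sg)) hterm
  rw [Real.norm_eq_abs, abs_mul, abs_two] at h
  linarith

end ChebyshevGruss

lemma hasSum_choose_mul_pow_mul_one_sub_pow {𝕜 : Type*} [NormedField 𝕜] [CompleteSpace 𝕜]
    {n : ℕ} (hn : 1 ≤ n) {t : 𝕜} (ht : ‖t‖ < 1) :
    HasSum (fun k => ((n + k - 1).choose k : 𝕜) * t ^ k * (1 - t) ^ n) 1 := by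
  have ht1 : (1 - t) ^ n ≠ 0 :=
    pow_ne_zero _ (sub_ne_zero.2 fun h => by simp [← h] at ht)
  have h := (hasSum_choose_mul_geometric_of_norm_lt_one (n - 1) ht).mul_right ((1 - t) ^ n)
  rw [Nat.sub_add_cancel hn, one_div_mul_cancel ht1] at h
  refine h.congr_fun fun k => ?_
  rw [show n + k - 1 = k + (n - 1) by omega, Nat.choose_symm_add]

noncomputable def baskakovBasis (n : ℕ) (x : ℝ) (k : ℕ) : ℝ :=
  ((n + k - 1).choose k : ℝ) * x ^ k / (1 + x) ^ (n + k)

lemma baskakovOp_eq_tsum (n : ℕ) (f : ℝ → ℝ) (x : ℝ) :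
    baskakovOp n f x = ∑' k : ℕ, f (k / n) * baskakovBasis n x k :=
  tsum_congr fun k => by rw [baskakovBasis]; ring

section Baskakov

variable {n : ℕ} {x : ℝ}

lemma baskakovBasis_nonneg (hx : 0 ≤ x) (k : ℕ) : 0 ≤ baskakovBasis n x k := by
  unfold baskakovBasis
  positivity

lemma hasSum_baskakovBasis (hn : 1 ≤ n) (hx : 0 ≤ x) : HasSum (baskakovBasis n x) 1 := by
  have hx1 : 0 < 1 + x := by linarith
  have ht : ‖x / (1 + x)‖ < 1 := by
    rw [Real.norm_of_nonneg (by positivity), div_lt_one hx1]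
    linarith
  refine (hasSum_choose_mul_pow_mul_one_sub_pow hn ht).congr_fun fun k => ?_
  rw [baskakovBasis, show 1 - x / (1 + x) = 1 / (1 + x) by field_simp; ring, div_pow, div_pow,
    one_pow, pow_add]
  field_simp

lemma hasSum_sq_baskakovBasis (hn : 1 ≤ n) (hx : 0 ≤ x) :
    HasSum (fun k => baskakovBasis n x k ^ 2) (baskakovTheta n x) := by
  have h1 := hasSum_baskakovBasis hn hx
  have hle : ∀ k, baskakovBasis n x k ≤ 1 :=
    fun k => le_hasSum h1 k fun j _ => baskakovBasis_nonneg hx j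
  have hsq : Summable fun k => baskakovBasis n x k ^ 2 :=
    h1.summable.of_nonneg_of_le (fun _ => sq_nonneg _) fun k => by
      nlinarith [baskakovBasis_nonneg (n := n) hx k, hle k]
  convert hsq.hasSum using 1
  rw [baskakovTheta, ← tsum_mul_left]
  refine tsum_congr fun k => ?_
  have hx1 : 1 + x ≠ 0 := by linarith
  rw [baskakovBasis, div_pow, div_pow, mul_pow]
  field_simp
  ring

end Baskakov

lemma abs_sub_le_sSup_of_ne {F : ℕ → ℝ} {C : ℝ} (hF : ∀ k, |F k| ≤ C) {k l : ℕ} (hkl : k ≠ l) :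
    |F k - F l| ≤ sSup {d : ℝ | ∃ k l : ℕ, k < l ∧ d = |F k - F l|} := by
  have hbdd : BddAbove {d : ℝ | ∃ k l : ℕ, k < l ∧ d = |F k - F l|} := by
    refine ⟨C + C, ?_⟩
    rintro d ⟨k, l, -, rfl⟩
    exact (abs_sub _ _).trans (add_le_add (hF k) (hF l))
  rcases hkl.lt_or_gt with h | h
  · exact le_csSup hbdd ⟨k, l, h, rfl⟩
  · rw [abs_sub_comm]
    exact le_csSup hbdd ⟨l, k, h, rfl⟩

theorem baskakov_chebyshev_gruss_general (n : ℕ) (hn : 1 ≤ n)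
    (f g : ℝ → ℝ)
    (hfb : ∃ C, ∀ y ∈ Set.Ici (0:ℝ), |f y| ≤ C) (hgb : ∃ C, ∀ y ∈ Set.Ici (0:ℝ), |g y| ≤ C)
    (x : ℝ) (hx : 0 ≤ x) :
    |baskakovOp n (fun t => f t * g t) x - baskakovOp n f x * baskakovOp n g x| ≤
      (1 / 2) * (1 - baskakovTheta n x) *
        sSup {d : ℝ | ∃ k l : ℕ, k < l ∧ d = |f (k / n) - f (l / n)|} *
        sSup {d : ℝ | ∃ k l : ℕ, k < l ∧ d = |g (k / n) - g (l / n)|} := by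
  obtain ⟨Cf, hCf⟩ := hfb
  obtain ⟨Cg, hCg⟩ := hgb
  have hgrid : ∀ k : ℕ, (k / n : ℝ) ∈ Set.Ici 0 := fun k => Set.mem_Ici.2 (by positivity)
  have hF : ∀ k : ℕ, |f (k / n)| ≤ Cf := fun k => hCf _ (hgrid k)
  have hG : ∀ k : ℕ, |g (k / n)| ≤ Cg := fun k => hCg _ (hgrid k)
  simp only [baskakovOp_eq_tsum]
  exact abs_tsum_mul_sub_tsum_mul_tsum_le (hasSum_baskakovBasis hn hx)
    (baskakovBasis_nonneg hx) (hasSum_sq_baskakovBasis hn hx) hF hG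
    (fun _ _ => abs_sub_le_sSup_of_ne hF) (fun _ _ => abs_sub_le_sSup_of_ne hG)

/-- The new Chebyshev-Grüss-type inequality for the Baskakov operator. -/
theorem baskakov_chebyshev_gruss (n : ℕ) (hn : 1 ≤ n)
    (f g : ℝ → ℝ)
    (hf : ContinuousOn f (Set.Ici (0:ℝ))) (hg : ContinuousOn g (Set.Ici (0:ℝ)))
    (hfb : ∃ C, ∀ y ∈ Set.Ici (0:ℝ), |f y| ≤ C) (hgb : ∃ C, ∀ y ∈ Set.Ici (0:ℝ), |g y| ≤ C)
    (x : ℝ) (hx : 0 ≤ x) :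
    |baskakovOp n (fun t => f t * g t) x - baskakovOp n f x * baskakovOp n g x| ≤
      (1 / 2) * (1 - baskakovTheta n x) *
        sSup {d : ℝ | ∃ k l : ℕ, k < l ∧ d = |f (k / n) - f (l / n)|} *
        sSup {d : ℝ | ∃ k l : ℕ, k < l ∧ d = |g (k / n) - g (l / n)|} :=
  baskakov_chebyshev_gruss_general n hn f g hfb hgb x hx
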